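/- If Γ is a finite abelian group and S ∈ B(Γ), then every d-fold sumset dS = S + S + ... + S (d times, d ≥ 1) belongs to B(Γ). -/

import Mathlib

open Pointwise

/-- The Boolean algebra of subsets of `Γ` generated by the subgroups of `Γ`. -/
inductive InB (Γ : Type*) [AddGroup Γ] : Set Γ → Prop
  | subgroup (H : AddSubgroup Γ) : InB Γ (H : Set Γ)
  | compl {S : Set Γ} : InB Γ S → InB Γ Sᶜ
  | union {S T : Set Γ} : InB Γ S → InB Γ T → InB Γ (S ∪ T)

/-- `Atom a` is the set of elements generating the same cyclic subgroup as `a`. -/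
def Atom {Γ : Type*} [AddGroup Γ] (a : Γ) : Set Γ :=
  {b | AddSubgroup.zmultiples a = AddSubgroup.zmultiples b}

/-!
For finite `Γ`, a set lies in `B(Γ)` exactly when it is a union of atoms, the classes of
elements generating the same cyclic subgroup. If `⟨a⟩ = ⟨b⟩` then `b = m • a` with `m` coprime
to `|Γ|`, and `x ↦ m • x` is an additive endomorphism mapping every atom to itself. So it maps
a union of atoms `S` into itself, hence also `d • S` into itself, which makes `d • S` a union
of atoms.
-/

section AtomDecomposition

variable {Γ : Type*} [AddGroup Γ]

namespace InB

lemma univ : InB Γ Set.univ := by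
  simpa using InB.subgroup (⊤ : AddSubgroup Γ)

lemma empty : InB Γ ∅ := by
  simpa using (univ (Γ := Γ)).compl

lemma diff {S T : Set Γ} (hS : InB Γ S) (hT : InB Γ T) : InB Γ (S \ T) := by
  simpa [Set.sdiff_eq, Set.compl_union] using (hS.compl.union hT).compl

lemma sUnion {𝒮 : Set (Set Γ)} (h𝒮 : 𝒮.Finite) (h : ∀ S ∈ 𝒮, InB Γ S) : InB Γ (⋃₀ 𝒮) := by
  induction 𝒮, h𝒮 using Set.Finite.induction_on with
  | empty => simpa using empty
  | insert _ _ ih =>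
    rw [Set.sUnion_insert]
    exact (h _ (Set.mem_insert _ _)).union (ih fun S hS => h S (Set.mem_insert_of_mem _ hS))

lemma iUnion {ι : Type*} [Finite ι] {f : ι → Set Γ} (h : ∀ i, InB Γ (f i)) :
    InB Γ (⋃ i, f i) := by
  rw [← Set.sUnion_range]
  exact sUnion (Set.finite_range f) (Set.forall_mem_range.mpr h)

lemma atom_subset {S : Set Γ} (hS : InB Γ S) {a : Γ} (ha : a ∈ S) : Atom a ⊆ S := by
  induction hS generalizing a with
  | subgroup H =>
    intro b hab
    exact AddSubgroup.zmultiples_le.mp (hab ▸ AddSubgroup.zmultiples_le.mpr ha)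
  | compl _ ih =>
    intro b hab hb
    exact ha (ih hb hab.symm)
  | union _ _ ihS ihT =>
    rcases ha with ha | ha
    · exact (ihS ha).trans Set.subset_union_left
    · exact (ihT ha).trans Set.subset_union_right

end InB

lemma atom_eq_diff (a : Γ) :
    Atom a = (AddSubgroup.zmultiples a : Set Γ) \
      ⋃ b : {b : Γ // a ∉ AddSubgroup.zmultiples b}, (AddSubgroup.zmultiples b.1 : Set Γ) := by
  ext c
  simp only [Atom, Set.mem_ofPred_eq, Set.mem_sdiff, Set.mem_iUnion, SetLike.mem_coe,
    Subtype.exists, not_exists, not_imp_not]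
  constructor
  · rintro h
    exact ⟨h ▸ AddSubgroup.mem_zmultiples c, fun b hcb =>
      AddSubgroup.zmultiples_le.mpr hcb (h ▸ AddSubgroup.mem_zmultiples a)⟩
  · rintro ⟨hc, ha⟩
    exact le_antisymm (AddSubgroup.zmultiples_le.mpr (ha c (AddSubgroup.mem_zmultiples c)))
      (AddSubgroup.zmultiples_le.mpr hc)

variable [Finite Γ]

lemma inB_atom (a : Γ) : InB Γ (Atom a) := by
  rw [atom_eq_diff]
  exact (InB.subgroup _).diff (InB.iUnion fun b => InB.subgroup _)

lemma inB_of_atom_subset {S : Set Γ} (h : ∀ a ∈ S, Atom a ⊆ S) : InB Γ S := by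
  have hS : S = ⋃ a : S, Atom a.1 :=
    Set.Subset.antisymm (fun a ha => Set.mem_iUnion.mpr ⟨⟨a, ha⟩, rfl⟩)
      (Set.iUnion_subset fun a => h a a.2)
  rw [hS]
  exact InB.iUnion fun a => inB_atom a.1

end AtomDecomposition

lemma Nat.exists_coprime_modEq {k r n : ℕ} (hk : k.Coprime r) (hr : r ∣ n) (hn : n ≠ 0) :
    ∃ m : ℕ, m.Coprime n ∧ m ≡ k [MOD r] := by
  have : NeZero n := ⟨hn⟩
  have : NeZero r := ⟨fun h => hn (Nat.eq_zero_of_zero_dvd (h ▸ hr))⟩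
  obtain ⟨u, hu⟩ := ZMod.unitsMap_surjective hr (ZMod.unitOfCoprime k hk)
  refine ⟨(u : ZMod n).val, ZMod.val_coe_unit_coprime u, ?_⟩
  rw [← ZMod.natCast_eq_natCast_iff, ZMod.natCast_val, ← ZMod.unitsMap_val hr, hu,
    ZMod.coe_unitOfCoprime]

section Generators

variable {G : Type*} [AddGroup G]

lemma zmultiples_nsmul_of_coprime {x : G} {m : ℕ} (hm : m.Coprime (addOrderOf x)) :
    AddSubgroup.zmultiples (m • x) = AddSubgroup.zmultiples x := by
  obtain ⟨l, hl⟩ := exists_nsmul_eq_self_of_coprime hm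
  have hx : x ∈ AddSubgroup.zmultiples (m • x) := by
    simpa only [hl] using AddSubgroup.nsmul_mem_zmultiples (m • x) l
  exact le_antisymm (AddSubgroup.zmultiples_le.mpr (AddSubgroup.nsmul_mem_zmultiples x m))
    (AddSubgroup.zmultiples_le.mpr hx)

lemma zmultiples_nsmul_of_coprime_card {m : ℕ} (hm : m.Coprime (Nat.card G)) (x : G) :
    AddSubgroup.zmultiples (m • x) = AddSubgroup.zmultiples x :=
  zmultiples_nsmul_of_coprime (hm.coprime_dvd_right (addOrderOf_dvd_natCard x))

lemma exists_coprime_card_nsmul_eq_of_mem_atom [Finite G] {a b : G} (hb : b ∈ Atom a) :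
    ∃ m : ℕ, m.Coprime (Nat.card G) ∧ m • a = b := by
  replace hb : AddSubgroup.zmultiples a = AddSubgroup.zmultiples b := hb
  obtain ⟨k, rfl⟩ : ∃ k : ℕ, k • a = b := by
    rw [← AddSubmonoid.mem_multiples_iff, mem_multiples_iff_mem_zmultiples]
    exact hb ▸ AddSubgroup.mem_zmultiples b
  have hord : addOrderOf (k • a) = addOrderOf a := by
    rw [← Nat.card_zmultiples, ← Nat.card_zmultiples, hb]
  have hk : k.Coprime (addOrderOf a) := by
    rw [addOrderOf_nsmul, Nat.div_eq_self] at hord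
    exact Nat.coprime_comm.mp (hord.resolve_left (addOrderOf_pos a).ne')
  obtain ⟨m, hm, hmk⟩ := Nat.exists_coprime_modEq hk (addOrderOf_dvd_natCard a) Nat.card_pos.ne'
  exact ⟨m, hm, nsmul_eq_nsmul_iff_modEq.mpr hmk⟩

end Generators

theorem nsmul_sumset_mem_B_general {Γ : Type*} [AddCommGroup Γ] [Fintype Γ]
    (S : Set Γ) (hS : InB Γ S) (d : ℕ) :
    InB Γ (d • S) := by
  refine inB_of_atom_subset fun a ha b hb => ?_
  obtain ⟨m, hm, rfl⟩ := exists_coprime_card_nsmul_eq_of_mem_atom hb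
  have hSm : nsmulAddMonoidHom m '' S ⊆ S := by
    rintro _ ⟨s, hs, rfl⟩
    exact hS.atom_subset hs (zmultiples_nsmul_of_coprime_card hm s).symm
  have hdSm : nsmulAddMonoidHom m '' (d • S) ⊆ d • S := by
    rw [Set.image_nsmul]
    exact Set.nsmul_subset_nsmul_left hSm
  exact hdSm ⟨a, ha, rfl⟩

theorem nsmul_sumset_mem_B {Γ : Type*} [AddCommGroup Γ] [Fintype Γ]
    (S : Set Γ) (hS : InB Γ S) (hne : S.Nonempty) (d : ℕ) (hd : 1 ≤ d) :
    InB Γ (d • S) :=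
  nsmul_sumset_mem_B_general S hS d
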